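/- arXiv:2402.15437 — 4 statements merged into one kernel-verified Lean document; each statement's English description precedes it below -/
import Mathlib

section
/- Admissibility of physically realizable states: for any EOS h and any primitive variables ρ > 0, p > 0, v ∈ ℝ³ with |v| < 1, B ∈ ℝ³, the conserved state U = (D,m,B,E) defined from them satisfies U·n₁ > 0 and U·n* + p_m* > 0 for all auxiliary variables v* ∈ ℝ³ with |v*| < 1 and B* ∈ ℝ³; that is, U belongs to the GQL set G_*. -/
open scoped BigOperators

noncomputable section

/-- 3-vectors. -/
abbrev V3 : Type := Fin 3 → ℝ

/-- A conserved state `U = (D, m, B, E)`, an element of `ℝ⁸`. -/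
abbrev RMHDState : Type := ℝ × V3 × V3 × ℝ

/-- Euclidean dot product on `ℝ³`. -/
def dot3 (a b : V3) : ℝ := ∑ i, a i * b i

/-- Squared Euclidean norm on `ℝ³`. -/
def sq3 (a : V3) : ℝ := dot3 a a

/-- `q(U) = E - √(D² + |m|²)`. -/
def qfun (U : RMHDState) : ℝ := U.2.2.2 - Real.sqrt (U.1 ^ 2 + sq3 U.2.1)

/-- `φ(U) = √((|B|² - E)² + 3(E² - D² - |m|²))`. -/
def phifun (U : RMHDState) : ℝ :=
  Real.sqrt ((sq3 U.2.2.1 - U.2.2.2) ^ 2 + 3 * (U.2.2.2 ^ 2 - U.1 ^ 2 - sq3 U.2.1))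

/-- `Φ(U) = (φ(U) + 2E - 2|B|²)·√(φ(U) + |B|² - E) - √((27/2)(D²|B|² + (m·B)²))`. -/
def Phifun (U : RMHDState) : ℝ :=
  (phifun U + 2 * U.2.2.2 - 2 * sq3 U.2.2.1) * Real.sqrt (phifun U + sq3 U.2.2.1 - U.2.2.2)
    - Real.sqrt ((27 / 2) * (U.1 ^ 2 * sq3 U.2.2.1 + dot3 U.2.1 U.2.2.1 ^ 2))

/-- The admissible state set `G = {U : D > 0, q(U) > 0, Φ(U) > 0}`. -/
def Gset : Set RMHDState := {U | 0 < U.1 ∧ 0 < qfun U ∧ 0 < Phifun U}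

/-- `U · n₁` where `n₁ = (1,0,0,0,0,0,0,0)`. -/
def dotn1 (U : RMHDState) : ℝ := U.1

/-- `U · n*` where `n* = (-√(1-|v*|²), -v*, -(1-|v*|²)B*, 1)`. -/
def dotnstar (vs Bs : V3) (U : RMHDState) : ℝ :=
  -(Real.sqrt (1 - sq3 vs)) * U.1 - dot3 vs U.2.1 - (1 - sq3 vs) * dot3 Bs U.2.2.1 + U.2.2.2

/-- `p_m* = ((1-|v*|²)|B*|² + (v*·B*)²)/2`. -/
def pmstar (vs Bs : V3) : ℝ := ((1 - sq3 vs) * sq3 Bs + dot3 vs Bs ^ 2) / 2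

/-- The GQL set `G_* = {U : U·n₁ > 0 and U·n* + p_m* > 0 for all |v*| < 1, B* ∈ ℝ³}`. -/
def GstarSet : Set RMHDState :=
  {U | 0 < dotn1 U ∧ ∀ vs Bs : V3, sq3 vs < 1 → 0 < dotnstar vs Bs U + pmstar vs Bs}

/-- An equation of state: continuously differentiable on `(0,∞)²`, satisfying (heq1) and (heq2). -/
def IsEOS (h : ℝ → ℝ → ℝ) : Prop :=
  ContDiffOn ℝ 1 (fun x : ℝ × ℝ => h x.1 x.2) {x : ℝ × ℝ | 0 < x.1 ∧ 0 < x.2} ∧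
  (∀ p ρ : ℝ, 0 < p → 0 < ρ → Real.sqrt (1 + p ^ 2 / ρ ^ 2) + p / ρ ≤ h p ρ) ∧
  (∀ p ρ : ℝ, 0 < p → 0 < ρ →
    h p ρ * (1 / ρ - deriv (fun p' => h p' ρ) p) < deriv (fun ρ' => h p ρ') ρ ∧
      deriv (fun ρ' => h p ρ') ρ < 0)

/-- Lorentz factor `W = 1/√(1-|v|²)`. -/
def lorentzW (v : V3) : ℝ := 1 / Real.sqrt (1 - sq3 v)

/-- Magnetic pressure `p_m = ((1-|v|²)|B|² + (v·B)²)/2`. -/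
def pmag (v B : V3) : ℝ := ((1 - sq3 v) * sq3 B + dot3 v B ^ 2) / 2

/-- The conserved state `U = (D, m, B, E)` built from primitive variables via the EOS `h`. -/
def consState (h : ℝ → ℝ → ℝ) (ρ p : ℝ) (v B : V3) : RMHDState :=
  (ρ * lorentzW v,
   fun i => ρ * h p ρ * lorentzW v ^ 2 * v i + sq3 B * v i - dot3 v B * B i,
   B,
   ρ * h p ρ * lorentzW v ^ 2 - (p + pmag v B) + sq3 B)

/-- The flux `F_ℓ(U)` built from the primitive variables (note `W⁻² = 1 - |v|²`). -/
def fluxP (h : ℝ → ℝ → ℝ) (ρ p : ℝ) (v B : V3) (ℓ : Fin 3) : RMHDState :=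
  (ρ * lorentzW v * v ℓ,
   fun i => v ℓ * (ρ * h p ρ * lorentzW v ^ 2 * v i + sq3 B * v i - dot3 v B * B i)
     - B ℓ * ((1 - sq3 v) * B i + dot3 v B * v i)
     + (p + pmag v B) * (if i = ℓ then 1 else 0),
   fun i => v ℓ * B i - B ℓ * v i,
   ρ * h p ρ * lorentzW v ^ 2 * v ℓ + sq3 B * v ℓ - dot3 v B * B ℓ)

/-- The symmetrization source vector `S(U) = (0, (1-|v|²)B + (v·B)v, v, v·B)`. -/
def sourceP (v B : V3) : RMHDState :=
  (0, fun i => (1 - sq3 v) * B i + dot3 v B * v i, v, dot3 v B)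

lemma sq3_nonneg' (a : V3) : 0 ≤ sq3 a := by
  simp only [sq3, dot3]
  exact Finset.sum_nonneg fun i _ => mul_self_nonneg _

lemma cauchy3 (a b : V3) : dot3 a b ^ 2 ≤ sq3 a * sq3 b := by
  have := Finset.sum_mul_sq_le_sq_mul_sq Finset.univ a b
  simp only [dot3, sq3]
  calc (∑ i, a i * b i) ^ 2 ≤ (∑ i, a i ^ 2) * ∑ i, b i ^ 2 := this
    _ = (∑ i, a i * a i) * ∑ i, b i * b i := by
        congr 1 <;> exact Finset.sum_congr rfl fun i _ => by ring

lemma dot3_le_sqrt (a b : V3) : dot3 a b ≤ Real.sqrt (sq3 a) * Real.sqrt (sq3 b) := by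
  have h1 : dot3 a b ≤ Real.sqrt (dot3 a b ^ 2) := by
    rw [Real.sqrt_sq_eq_abs]; exact le_abs_self _
  calc dot3 a b ≤ Real.sqrt (dot3 a b ^ 2) := h1
    _ ≤ Real.sqrt (sq3 a * sq3 b) := Real.sqrt_le_sqrt (cauchy3 a b)
    _ = Real.sqrt (sq3 a) * Real.sqrt (sq3 b) := Real.sqrt_mul (sq3_nonneg' a) _

set_option maxHeartbeats 2000000 in
/-- The hydrodynamic part of the GQL inequality, abstracted to scalars. -/
lemma hydro_part (a ρ p W u r s c : ℝ) (hρ : 0 < ρ) (hp : 0 < p)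
    (ha : Real.sqrt (ρ ^ 2 + p ^ 2) + p ≤ a)
    (hu : 0 ≤ u) (hW1 : 1 ≤ W) (hW2 : W ^ 2 * (1 - u ^ 2) = 1)
    (hr : 0 ≤ r) (hs : 0 ≤ s) (hrs : r ^ 2 + s ^ 2 = 1)
    (hc : c ≤ u * r) :
    p + ρ * W * s < a * W ^ 2 * (1 - c) := by
  have hsq : Real.sqrt (ρ ^ 2 + p ^ 2) ^ 2 = ρ ^ 2 + p ^ 2 :=
    Real.sq_sqrt (by positivity)
  have hsn : 0 ≤ Real.sqrt (ρ ^ 2 + p ^ 2) := Real.sqrt_nonneg _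
  have hρle : ρ ≤ Real.sqrt (ρ ^ 2 + p ^ 2) := by
    calc ρ = Real.sqrt (ρ ^ 2) := (Real.sqrt_sq hρ.le).symm
      _ ≤ Real.sqrt (ρ ^ 2 + p ^ 2) := Real.sqrt_le_sqrt (by nlinarith)
  have hap : p < a := by linarith
  have ha0 : 0 < a := lt_trans hp hap
  have ha2 : ρ ^ 2 + p ^ 2 ≤ (a - p) ^ 2 := by nlinarith
  have hW0 : (0:ℝ) < W := lt_of_lt_of_le one_pos hW1
  have hW21 : (1:ℝ) ≤ W ^ 2 := by nlinarith
  have hKarg : 0 ≤ a ^ 2 * W ^ 4 * u ^ 2 + ρ ^ 2 * W ^ 2 := by positivity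
  set K := Real.sqrt (a ^ 2 * W ^ 4 * u ^ 2 + ρ ^ 2 * W ^ 2) with hK
  have hKn : 0 ≤ K := Real.sqrt_nonneg _
  have hK2 : K ^ 2 = a ^ 2 * W ^ 4 * u ^ 2 + ρ ^ 2 * W ^ 2 := Real.sq_sqrt hKarg
  have ht0 : 0 ≤ a * W ^ 2 * u * r + ρ * W * s :=
    add_nonneg (mul_nonneg (mul_nonneg (mul_nonneg ha0.le (sq_nonneg W)) hu) hr)
      (mul_nonneg (mul_nonneg hρ.le hW0.le) hs)
  have hexp : (a * W ^ 2 * u * r + ρ * W * s) ^ 2 + (a * W ^ 2 * u * s - ρ * W * r) ^ 2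
      = (a ^ 2 * W ^ 4 * u ^ 2 + ρ ^ 2 * W ^ 2) * (r ^ 2 + s ^ 2) := by ring
  have ht2 : (a * W ^ 2 * u * r + ρ * W * s) ^ 2 ≤ K ^ 2 := by
    rw [hrs, mul_one] at hexp
    nlinarith [sq_nonneg (a * W ^ 2 * u * s - ρ * W * r)]
  have step1 : a * W ^ 2 * u * r + ρ * W * s ≤ K := by nlinarith
  have hWu : W ^ 2 * u ^ 2 = W ^ 2 - 1 := by linear_combination -hW2
  have hy : 0 < a * W ^ 2 - p := by nlinarith [mul_le_mul_of_nonneg_left hW21 ha0.le]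
  have hK2' : K ^ 2 = a ^ 2 * W ^ 4 - a ^ 2 * W ^ 2 + ρ ^ 2 * W ^ 2 := by
    rw [hK2]; linear_combination a ^ 2 * W ^ 2 * hWu
  have h5 : 0 ≤ a ^ 2 - 2 * a * p - ρ ^ 2 := by nlinarith
  have step2' : K ^ 2 < (a * W ^ 2 - p) ^ 2 := by
    nlinarith [mul_nonneg (sq_nonneg W) h5, sq_nonneg p]
  have step2 : K < a * W ^ 2 - p := by nlinarith
  have haW : (0:ℝ) < a * W ^ 2 := mul_pos ha0 (pow_pos hW0 2)
  nlinarith [mul_le_mul_of_nonneg_left hc haW.le]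

set_option maxHeartbeats 2000000 in
/-- The magnetic part of the GQL inequality is nonnegative. -/
lemma mag_part (v B vs Bs : V3) (hvs : sq3 vs < 1) :
    0 ≤ sq3 B - sq3 B * dot3 v vs + dot3 v B * dot3 vs B - pmag v B
      - (1 - sq3 vs) * dot3 Bs B + pmstar vs Bs := by
  set d : V3 := fun i => Bs i - (B i - dot3 vs B * vs i) with hd
  have key : 2 * (sq3 B - sq3 B * dot3 v vs + dot3 v B * dot3 vs B - pmag v B
      - (1 - sq3 vs) * dot3 Bs B + pmstar vs Bs)
      = (1 - sq3 vs) * sq3 d + (dot3 vs d) ^ 2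
        + (sq3 (fun i => v i - vs i) * sq3 B - dot3 (fun i => v i - vs i) B ^ 2)
        + (2 - sq3 vs) * dot3 vs B ^ 2 := by
    simp only [hd, dot3, sq3, pmag, pmstar, Fin.sum_univ_three]
    ring
  have c1 : (0:ℝ) ≤ 1 - sq3 vs := by linarith
  have c2 : 0 ≤ sq3 d := sq3_nonneg' d
  have c3 : dot3 (fun i => v i - vs i) B ^ 2 ≤ sq3 (fun i => v i - vs i) * sq3 B :=
    cauchy3 _ _
  nlinarith [mul_nonneg c1 c2, sq_nonneg (dot3 vs d), sq_nonneg (dot3 vs B),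
    mul_nonneg (by linarith : (0:ℝ) ≤ 2 - sq3 vs) (sq_nonneg (dot3 vs B)), key, c3]

set_option maxHeartbeats 2000000 in
/-- Any physically realizable conserved state belongs to the GQL set `G_*`. -/
theorem consState_mem_GstarSet (h : ℝ → ℝ → ℝ) (hEOS : IsEOS h)
    (ρ p : ℝ) (v B : V3) (hρ : 0 < ρ) (hp : 0 < p) (hv : sq3 v < 1) :
    consState h ρ p v B ∈ GstarSet := by
  have hv0 : 0 ≤ sq3 v := sq3_nonneg' v
  have hs0 : 0 < Real.sqrt (1 - sq3 v) := Real.sqrt_pos.mpr (by linarith)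
  have h1v : (0:ℝ) < 1 - sq3 v := by linarith
  have hs1 : Real.sqrt (1 - sq3 v) ≤ 1 := Real.sqrt_le_one.mpr (by linarith)
  have hWpos : 0 < lorentzW v := by
    rw [lorentzW]; positivity
  have hW1 : 1 ≤ lorentzW v := by
    rw [lorentzW, le_div_iff₀ hs0, one_mul]; exact hs1
  have hW2 : lorentzW v ^ 2 * (1 - Real.sqrt (sq3 v) ^ 2) = 1 := by
    rw [Real.sq_sqrt hv0, lorentzW, div_pow, one_pow, Real.sq_sqrt h1v.le]
    exact one_div_mul_cancel (ne_of_gt h1v)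
  -- the EOS bound: √(ρ² + p²) + p ≤ ρ h(p,ρ)
  have hEOS1 := hEOS.2.1 p ρ hp hρ
  have hsqrt_eq : Real.sqrt (ρ ^ 2 + p ^ 2) = ρ * Real.sqrt (1 + p ^ 2 / ρ ^ 2) := by
    rw [show ρ ^ 2 + p ^ 2 = ρ ^ 2 * (1 + p ^ 2 / ρ ^ 2) by field_simp,
      Real.sqrt_mul (sq_nonneg ρ), Real.sqrt_sq hρ.le]
  have ha : Real.sqrt (ρ ^ 2 + p ^ 2) + p ≤ ρ * h p ρ := by
    rw [hsqrt_eq]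
    have := mul_le_mul_of_nonneg_left hEOS1 hρ.le
    have hpp : ρ * (p / ρ) = p := by field_simp
    nlinarith [this]
  constructor
  · show 0 < (consState h ρ p v B).1
    simp only [consState]
    exact mul_pos hρ hWpos
  · intro vs Bs hvs
    have hvs0 : 0 ≤ sq3 vs := sq3_nonneg' vs
    -- split into hydrodynamic and magnetic parts
    have hsplit : dotnstar vs Bs (consState h ρ p v B) + pmstar vs Bs =
        (ρ * h p ρ * lorentzW v ^ 2 * (1 - dot3 v vs) - p
          - ρ * lorentzW v * Real.sqrt (1 - sq3 vs))
        + (sq3 B - sq3 B * dot3 v vs + dot3 v B * dot3 vs B - pmag v B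
          - (1 - sq3 vs) * dot3 Bs B + pmstar vs Bs) := by
      simp only [dotnstar, consState, pmstar, pmag, dot3, sq3, Fin.sum_univ_three]
      ring
    have hrs : Real.sqrt (sq3 vs) ^ 2 + Real.sqrt (1 - sq3 vs) ^ 2 = 1 := by
      rw [Real.sq_sqrt hvs0, Real.sq_sqrt (by linarith : (0:ℝ) ≤ 1 - sq3 vs)]; ring
    have hhyd := hydro_part (ρ * h p ρ) ρ p (lorentzW v) (Real.sqrt (sq3 v))
      (Real.sqrt (sq3 vs)) (Real.sqrt (1 - sq3 vs)) (dot3 v vs) hρ hp ha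
      (Real.sqrt_nonneg _) hW1 hW2 (Real.sqrt_nonneg _) (Real.sqrt_nonneg _) hrs
      (dot3_le_sqrt v vs)
    have hmag := mag_part v B vs Bs hvs
    rw [hsplit]
    linarith
end
end

section
/- Discrete divergence identity for locally divergence-free polynomials: let k ≥ 0 and let Q ≥ 1 be such that the Q-point Gauss–Legendre quadrature on an interval is exact for all polynomials of degree at most k (e.g., Q = k+1). Let R = [x_l, x_r] × [y_b, y_t] be a rectangle with x_l < x_r, y_b < y_t, let {x^μ}_{μ=1}^Q ⊂ [x_l,x_r] and {y^μ}_{μ=1}^Q ⊂ [y_b,y_t] be the affinely mapped Gauss–Legendre nodes, and let {ω_μ}_{μ=1}^Q be the corresponding weights normalized so that Σ_μ ω_μ = 1. If B₁, B₂ are real bivariate polynomials of total degree at most k satisfying ∂B₁/∂x + ∂B₂/∂y ≡ 0 on R, then Σ_{μ=1}^Q ω_μ·[ (B₁(x_r, y^μ) − B₁(x_l, y^μ))/(x_r − x_l) + (B₂(x^μ, y_t) − B₂(x^μ, y_b))/(y_t − y_b) ] = 0. -/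
open scoped BigOperators

noncomputable section

/-- Evaluation of a bivariate polynomial at the point `(a, b)`. -/
def eval2 (f : MvPolynomial (Fin 2) ℝ) (a b : ℝ) : ℝ := MvPolynomial.eval ![a, b] f

/-!
The restriction of `B₁` to a vertical edge of the rectangle, and of `B₂` to a horizontal one,
is a univariate polynomial of degree at most `k`, so the exact quadrature replaces each node sum
by the average of the boundary values over that edge. The discrete sum is thus the boundary flux
of `(B₁, B₂)` divided by the area of the rectangle, and by the divergence theorem this flux is the
integral of `∂B₁/∂x + ∂B₂/∂y = 0`.
-/

open MvPolynomial Set MeasureTheory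
open scoped Interval

namespace MvPolynomial

theorem natDegree_aeval_le_totalDegree {R σ : Type*} [CommSemiring R]
    {g : σ → Polynomial R} (hg : ∀ i, (g i).natDegree ≤ 1) (p : MvPolynomial σ R) :
    (aeval g p).natDegree ≤ p.totalDegree := by
  rw [aeval_def, eval₂_eq]
  refine Polynomial.natDegree_sum_le_of_forall_le _ _ fun d hd => ?_
  calc _ ≤ (∏ i ∈ d.support, g i ^ d i).natDegree := Polynomial.natDegree_C_mul_le _ _
    _ ≤ ∑ i ∈ d.support, (g i ^ d i).natDegree := Polynomial.natDegree_prod_le _ _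
    _ ≤ ∑ i ∈ d.support, d i :=
        Finset.sum_le_sum fun i _ =>
          (Polynomial.natDegree_pow_le_of_le _ (hg i)).trans_eq (mul_one _)
    _ ≤ p.totalDegree := le_totalDegree hd

theorem polynomial_eval_aeval {R σ : Type*} [CommSemiring R] (g : σ → Polynomial R)
    (p : MvPolynomial σ R) (t : R) :
    (aeval g p).eval t = eval (fun i => (g i).eval t) p := by
  simpa using comp_aeval_apply (Polynomial.aeval t) p (f := g)

variable {σ 𝕜 E : Type*} [Fintype σ] [DecidableEq σ] [NontriviallyNormedField 𝕜]
  [NormedAddCommGroup E] [NormedSpace 𝕜 E]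

theorem hasFDerivAt_eval_comp {g : E → σ → 𝕜} {g' : σ → E →L[𝕜] 𝕜} {x : E}
    (hg : ∀ i, HasFDerivAt (fun z => g z i) (g' i) x) (p : MvPolynomial σ 𝕜) :
    HasFDerivAt (fun z => eval (g z) p) (∑ i, eval (g x) (pderiv i p) • g' i) x := by
  induction p using MvPolynomial.induction_on with
  | C a =>
    simp only [eval_C]
    refine (hasFDerivAt_const a x).congr_fderiv ?_
    ext v; simp
  | add p q hp hq =>
    simp only [map_add]
    refine (hp.fun_add hq).congr_fderiv ?_
    ext v; simp [Finset.sum_add_distrib, add_mul]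
  | mul_X p j hp =>
    simp only [eval_mul, eval_X]
    refine (hp.fun_mul (hg j)).congr_fderiv ?_
    ext v
    simp [Finset.sum_add_distrib, add_mul, Pi.single_apply, Finset.mul_sum,
      apply_ite (eval (g x)), ite_mul, mul_assoc]

end MvPolynomial

theorem exists_polynomial_eval_eq_eval2_left (B : MvPolynomial (Fin 2) ℝ) (c : ℝ) :
    ∃ p : Polynomial ℝ, p.natDegree ≤ B.totalDegree ∧ ∀ t, p.eval t = eval2 B c t := by
  refine ⟨aeval ![Polynomial.C c, Polynomial.X] B,
    natDegree_aeval_le_totalDegree (by simp [Fin.forall_fin_two]) B, fun t => ?_⟩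
  rw [polynomial_eval_aeval, eval2]
  congr; funext i; fin_cases i <;> simp

theorem exists_polynomial_eval_eq_eval2_right (B : MvPolynomial (Fin 2) ℝ) (c : ℝ) :
    ∃ p : Polynomial ℝ, p.natDegree ≤ B.totalDegree ∧ ∀ t, p.eval t = eval2 B t c := by
  refine ⟨aeval ![Polynomial.X, Polynomial.C c] B,
    natDegree_aeval_le_totalDegree (by simp [Fin.forall_fin_two]) B, fun t => ?_⟩
  rw [polynomial_eval_aeval, eval2]
  congr; funext i; fin_cases i <;> simp

theorem hasFDerivAt_eval2 (B : MvPolynomial (Fin 2) ℝ) (z : ℝ × ℝ) :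
    HasFDerivAt (fun z : ℝ × ℝ => eval2 B z.1 z.2)
      (eval2 (pderiv 0 B) z.1 z.2 • ContinuousLinearMap.fst ℝ ℝ ℝ
        + eval2 (pderiv 1 B) z.1 z.2 • ContinuousLinearMap.snd ℝ ℝ ℝ) z := by
  have hcoord : ∀ i, HasFDerivAt (fun z : ℝ × ℝ => ![z.1, z.2] i)
      (![ContinuousLinearMap.fst ℝ ℝ ℝ, ContinuousLinearMap.snd ℝ ℝ ℝ] i) z := by
    intro i; fin_cases i
    exacts [hasFDerivAt_fst, hasFDerivAt_snd]
  simpa [Fin.sum_univ_two, eval2] using hasFDerivAt_eval_comp hcoord B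

theorem continuous_eval2 (B : MvPolynomial (Fin 2) ℝ) :
    Continuous fun z : ℝ × ℝ => eval2 B z.1 z.2 :=
  continuous_iff_continuousAt.2 fun z => (hasFDerivAt_eval2 B z).continuousAt

theorem boundary_flux_eq_zero_of_divergence_eq_zero {B1 B2 : MvPolynomial (Fin 2) ℝ}
    {xl xr yb yt : ℝ} (hx : xl ≤ xr) (hy : yb ≤ yt)
    (hdiv : ∀ x y : ℝ, x ∈ Icc xl xr → y ∈ Icc yb yt →
      eval2 (pderiv 0 B1 + pderiv 1 B2) x y = 0) :
    (∫ x in xl..xr, eval2 B2 x yt) - (∫ x in xl..xr, eval2 B2 x yb)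
      + (∫ y in yb..yt, eval2 B1 xr y) - (∫ y in yb..yt, eval2 B1 xl y) = 0 := by
  have hint : IntegrableOn
      (fun z : ℝ × ℝ => eval2 (pderiv 0 B1) z.1 z.2 + eval2 (pderiv 1 B2) z.1 z.2)
      ([[xl, xr]] ×ˢ [[yb, yt]]) :=
    ((continuous_eval2 _).add (continuous_eval2 _)).continuousOn.integrableOn_compact
      (isCompact_uIcc.prod isCompact_uIcc)
  rw [← integral2_divergence_prod_of_hasFDerivAt _ _ _ _ xl yb xr yt
    (continuous_eval2 B1).continuousOn (continuous_eval2 B2).continuousOn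
    (fun z _ => hasFDerivAt_eval2 B1 z) (fun z _ => hasFDerivAt_eval2 B2 z) (by simpa using hint)]
  refine (intervalIntegral.integral_congr fun x hx' => ?_).trans intervalIntegral.integral_zero
  refine (intervalIntegral.integral_congr fun y hy' => ?_).trans intervalIntegral.integral_zero
  rw [uIcc_of_le hx] at hx'
  rw [uIcc_of_le hy] at hy'
  simpa [eval2] using hdiv x y hx' hy'

def IsExactQuadrature {ι : Type*} [Fintype ι] (k : ℕ) (w t : ι → ℝ) (a b : ℝ) : Prop :=
  ∀ p : Polynomial ℝ, p.natDegree ≤ k →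
    ∑ μ, w μ * p.eval (t μ) = (∫ s in a..b, p.eval s) / (b - a)

namespace IsExactQuadrature

variable {ι : Type*} [Fintype ι] {k : ℕ} {w t : ι → ℝ} {a b : ℝ}

theorem sum_mul_eval2_left (h : IsExactQuadrature k w t a b) {B : MvPolynomial (Fin 2) ℝ}
    (hB : B.totalDegree ≤ k) (c : ℝ) :
    ∑ μ, w μ * eval2 B c (t μ) = (∫ s in a..b, eval2 B c s) / (b - a) := by
  obtain ⟨p, hp, hpB⟩ := exists_polynomial_eval_eq_eval2_left B c
  simpa only [hpB] using h p (hp.trans hB)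

theorem sum_mul_eval2_right (h : IsExactQuadrature k w t a b) {B : MvPolynomial (Fin 2) ℝ}
    (hB : B.totalDegree ≤ k) (c : ℝ) :
    ∑ μ, w μ * eval2 B (t μ) c = (∫ s in a..b, eval2 B s c) / (b - a) := by
  obtain ⟨p, hp, hpB⟩ := exists_polynomial_eval_eq_eval2_right B c
  simpa only [hpB] using h p (hp.trans hB)

end IsExactQuadrature

theorem discrete_divergence_identity_general (k Q : ℕ)
    (xl xr yb yt : ℝ) (hx : xl < xr) (hy : yb < yt)
    (xn yn w : Fin Q → ℝ)
    (hExactX : ∀ p : Polynomial ℝ, p.natDegree ≤ k →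
      ∑ μ, w μ * p.eval (xn μ) = (∫ t in xl..xr, p.eval t) / (xr - xl))
    (hExactY : ∀ p : Polynomial ℝ, p.natDegree ≤ k →
      ∑ μ, w μ * p.eval (yn μ) = (∫ t in yb..yt, p.eval t) / (yt - yb))
    (B1 B2 : MvPolynomial (Fin 2) ℝ)
    (hB1 : B1.totalDegree ≤ k) (hB2 : B2.totalDegree ≤ k)
    (hdf : ∀ x y : ℝ, x ∈ Set.Icc xl xr → y ∈ Set.Icc yb yt →
      eval2 (MvPolynomial.pderiv 0 B1 + MvPolynomial.pderiv 1 B2) x y = 0) :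
    ∑ μ, w μ * ((eval2 B1 xr (yn μ) - eval2 B1 xl (yn μ)) / (xr - xl)
      + (eval2 B2 (xn μ) yt - eval2 B2 (xn μ) yb) / (yt - yb)) = 0 := by
  have hX : IsExactQuadrature k w xn xl xr := hExactX
  have hY : IsExactQuadrature k w yn yb yt := hExactY
  simp only [mul_add, mul_div_assoc', mul_sub, Finset.sum_add_distrib, ← Finset.sum_div,
    Finset.sum_sub_distrib]
  rw [hY.sum_mul_eval2_left hB1, hY.sum_mul_eval2_left hB1, hX.sum_mul_eval2_right hB2,
    hX.sum_mul_eval2_right hB2]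
  linear_combination
    boundary_flux_eq_zero_of_divergence_eq_zero hx.le hy.le hdf / (xr - xl) / (yt - yb)

/-- **discrete divergence identity for locally divergence-free polynomials.** -/
theorem discrete_divergence_identity (k Q : ℕ) (hQ : 1 ≤ Q)
    (xl xr yb yt : ℝ) (hx : xl < xr) (hy : yb < yt)
    (xn yn w : Fin Q → ℝ)
    (hxn : ∀ μ, xn μ ∈ Set.Icc xl xr) (hyn : ∀ μ, yn μ ∈ Set.Icc yb yt)
    (hwsum : ∑ μ, w μ = 1)
    (hExactX : ∀ p : Polynomial ℝ, p.natDegree ≤ k →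
      ∑ μ, w μ * p.eval (xn μ) = (∫ t in xl..xr, p.eval t) / (xr - xl))
    (hExactY : ∀ p : Polynomial ℝ, p.natDegree ≤ k →
      ∑ μ, w μ * p.eval (yn μ) = (∫ t in yb..yt, p.eval t) / (yt - yb))
    (B1 B2 : MvPolynomial (Fin 2) ℝ)
    (hB1 : B1.totalDegree ≤ k) (hB2 : B2.totalDegree ≤ k)
    (hdf : ∀ x y : ℝ, x ∈ Set.Icc xl xr → y ∈ Set.Icc yb yt →
      eval2 (MvPolynomial.pderiv 0 B1 + MvPolynomial.pderiv 1 B2) x y = 0) :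
    ∑ μ, w μ * ((eval2 B1 xr (yn μ) - eval2 B1 xl (yn μ)) / (xr - xl)
      + (eval2 B2 (xn μ) yt - eval2 B2 (xn μ) yb) / (yt - yb)) = 0 :=
  discrete_divergence_identity_general k Q xl xr yb yt hx hy xn yn w hExactX hExactY B1 B2 hB1 hB2
    hdf
end
end

section
/- 2D Cui–Ding–Wu cell average decomposition for polynomials of degree at most 3: let {x^μ, ω_μ}_{μ=1}^Q be the Q-point Gauss–Legendre nodes and normalized weights on [−1,1] with Q = 4. Let λ₁, λ₂ ≥ 0 with λ := λ₁ + λ₂ > 0, set δ := (λ₁ − λ₂)/λ, ω̄ := 1/(4 + 2|δ|), ω̃ := (1+|δ|)/(2(2+|δ|)), and define the two internal nodes P₁, P₂ ∈ [−1,1]² by P₁ = (√(2|δ|/(3+3|δ|)), 0), P₂ = (−√(2|δ|/(3+3|δ|)), 0) if δ ≤ 0, and P₁ = (0, √(2δ/(3+3δ))), P₂ = (0, −√(2δ/(3+3δ))) if δ ≥ 0. Then for every real bivariate polynomial f of total degree at most 3: (1/4)∫_{[−1,1]²} f(x,y) dx dy = ω̄·Σ_{μ=1}^Q ω_μ [ (λ₁/λ)(f(−1,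 x^μ) + f(1, x^μ)) + (λ₂/λ)(f(x^μ, −1) + f(x^μ, 1)) ] + ω̃·(f(P₁) + f(P₂)). -/
/-!
Both sides are linear in `f`, so it suffices to check the monomials `a ^ i * b ^ j` with
`i + j ≤ 3`. The Gauss rule is exact in degree `≤ 7`, so on every edge the boundary sum
reproduces the one-dimensional moments `∫ t ^ k`. The internal nodes `±P` lie on a coordinate
axis, which kills every monomial with an odd exponent; the one remaining nontrivial check, the
square of the coordinate along that axis, is what fixes `s ^ 2 = 2|δ| / (3 + 3|δ|)`. For `δ > 0`
the two coordinates exchange roles.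
-/

open scoped BigOperators

noncomputable section

section
open Finset Polynomial

theorem eval2_eq_sum_coeff (f : MvPolynomial (Fin 2) ℝ) (a b : ℝ) :
    eval2 f a b = ∑ d ∈ f.support, f.coeff d * (a ^ d 0 * b ^ d 1) := by
  simp [eval2, MvPolynomial.eval_eq', Fin.prod_univ_two]

theorem integral_integral_eval2 (f : MvPolynomial (Fin 2) ℝ) (a₁ a₂ b₁ b₂ : ℝ) :
    ∫ a in a₁..a₂, ∫ b in b₁..b₂, eval2 f a b
      = ∑ d ∈ f.support, f.coeff d * ((∫ a in a₁..a₂, a ^ d 0) * ∫ b in b₁..b₂, b ^ d 1) := by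
  have inner : ∀ a, ∫ b in b₁..b₂, eval2 f a b
      = ∑ d ∈ f.support, f.coeff d * (a ^ d 0 * ∫ b in b₁..b₂, b ^ d 1) := fun a => by
    simp_rw [eval2_eq_sum_coeff]
    rw [intervalIntegral.integral_finsetSum fun d _ =>
      (by fun_prop : Continuous _).intervalIntegrable _ _]
    simp
  simp_rw [inner]
  rw [intervalIntegral.integral_finsetSum fun d _ =>
    (by fun_prop : Continuous _).intervalIntegrable _ _]
  simp

theorem sum_mul_pow_eq_of_exact {ι : Type*} [Fintype ι] {x w : ι → ℝ} {N : ℕ} {c a b : ℝ}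
    (hexact : ∀ p : ℝ[X], p.natDegree ≤ N →
      ∑ μ, w μ * p.eval (x μ) = c * ∫ t in a..b, p.eval t)
    {k : ℕ} (hk : k ≤ N) : ∑ μ, w μ * x μ ^ k = c * ∫ t in a..b, t ^ k := by
  simpa using hexact (X ^ k) (by simpa using hk)

theorem sum_mul_edge_eval2 {ι : Type*} [Fintype ι] (w x : ι → ℝ) (r₁ r₂ : ℝ)
    (f : MvPolynomial (Fin 2) ℝ) :
    ∑ μ, w μ * (r₁ * (eval2 f (-1) (x μ) + eval2 f 1 (x μ))
        + r₂ * (eval2 f (x μ) (-1) + eval2 f (x μ) 1))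
      = ∑ d ∈ f.support, f.coeff d * (r₁ * ((-1) ^ d 0 + 1) * ∑ μ, w μ * x μ ^ d 1
        + r₂ * ((-1) ^ d 1 + 1) * ∑ μ, w μ * x μ ^ d 0) := by
  simp only [eval2_eq_sum_coeff, ← sum_add_distrib, mul_sum]
  rw [sum_comm]
  exact sum_congr rfl fun _ _ => sum_congr rfl fun _ _ => by ring

theorem cuiDingWu_monomial {r₁ r₂ a s : ℝ} (ha : 0 ≤ a) (hr : r₁ + r₂ = 1)
    (hd : r₂ - r₁ = a) (hs : s ^ 2 = 2 * a / (3 + 3 * a)) {i j : ℕ} (hij : i + j ≤ 3) :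
    (1 / 4) * ((∫ t in (-1 : ℝ)..1, t ^ i) * ∫ t in (-1 : ℝ)..1, t ^ j)
      = (1 / (4 + 2 * a)) * (r₁ * ((-1) ^ i + 1) * ((1 / 2) * ∫ t in (-1 : ℝ)..1, t ^ j)
          + r₂ * ((-1) ^ j + 1) * ((1 / 2) * ∫ t in (-1 : ℝ)..1, t ^ i))
        + ((1 + a) / (2 * (2 + a))) * (s ^ i * 0 ^ j + (-s) ^ i * 0 ^ j) := by
  obtain rfl : r₁ = (1 - a) / 2 := by linarith
  obtain rfl : r₂ = (1 + a) / 2 := by linarith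
  have h2a : 2 + a ≠ 0 := by positivity
  have hi : i ≤ 3 := by omega
  have hj : j ≤ 3 := by omega
  simp only [integral_pow]
  interval_cases i <;> interval_cases j <;> try omega
  all_goals
    push_cast [neg_sq, hs]
    field_simp
    ring

end

theorem cuiDingWu_CAD_general (x w : Fin 4 → ℝ)
    (hGaussExact : ∀ p : Polynomial ℝ, p.natDegree ≤ 7 →
      ∑ μ, w μ * p.eval (x μ) = (1 / 2) * ∫ t in (-1 : ℝ)..1, p.eval t)
    (lam1 lam2 : ℝ) (hpos : 0 < lam1 + lam2) :
    ∀ f : MvPolynomial (Fin 2) ℝ, f.totalDegree ≤ 3 →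
      let δ : ℝ := (lam1 - lam2) / (lam1 + lam2)
      let s : ℝ := Real.sqrt (2 * |δ| / (3 + 3 * |δ|))
      let P1 : ℝ × ℝ := if δ ≤ 0 then (s, 0) else (0, s)
      let P2 : ℝ × ℝ := if δ ≤ 0 then (-s, 0) else (0, -s)
      (1 / 4) * ∫ a in (-1 : ℝ)..1, ∫ b in (-1 : ℝ)..1, eval2 f a b
        = (1 / (4 + 2 * |δ|)) * ∑ μ, w μ *
            ((lam1 / (lam1 + lam2)) * (eval2 f (-1) (x μ) + eval2 f 1 (x μ))
              + (lam2 / (lam1 + lam2)) * (eval2 f (x μ) (-1) + eval2 f (x μ) 1))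
          + ((1 + |δ|) / (2 * (2 + |δ|))) * (eval2 f P1.1 P1.2 + eval2 f P2.1 P2.2) := by
  intro f hf δ s P1 P2
  have hr : lam1 / (lam1 + lam2) + lam2 / (lam1 + lam2) = 1 := by field_simp
  have hδ : lam1 / (lam1 + lam2) - lam2 / (lam1 + lam2) = δ := by simp only [δ, sub_div]
  have hs : s ^ 2 = 2 * |δ| / (3 + 3 * |δ|) := Real.sq_sqrt (by positivity)
  rw [integral_integral_eval2, sum_mul_edge_eval2, eval2_eq_sum_coeff f P1.1,
    eval2_eq_sum_coeff f P2.1, ← Finset.sum_add_distrib, Finset.mul_sum, Finset.mul_sum,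
    Finset.mul_sum, ← Finset.sum_add_distrib]
  refine Finset.sum_congr rfl fun d hd => ?_
  have hdeg : d 0 + d 1 ≤ 3 := by
    have := (MvPolynomial.le_totalDegree hd).trans hf
    simpa [Finsupp.degree, Finsupp.sum_fintype, Fin.sum_univ_two] using this
  rw [sum_mul_pow_eq_of_exact hGaussExact (k := d 0) (by omega),
    sum_mul_pow_eq_of_exact hGaussExact (k := d 1) (by omega)]
  rcases le_or_gt δ 0 with hδ0 | hδ0
  · simp only [P1, P2, if_pos hδ0]
    linear_combination f.coeff d * cuiDingWu_monomial (abs_nonneg δ) hr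
      (by rw [abs_of_nonpos hδ0]; linarith) hs hdeg
  · simp only [P1, P2, if_neg hδ0.not_ge]
    linear_combination f.coeff d * cuiDingWu_monomial (r₁ := lam2 / (lam1 + lam2))
      (r₂ := lam1 / (lam1 + lam2)) (abs_nonneg δ) (by linarith)
      (by rw [abs_of_pos hδ0]; linarith) hs (by omega : d 1 + d 0 ≤ 3)

/-- **2D Cui–Ding–Wu cell average decomposition for degree ≤ 3.** -/
theorem cuiDingWu_CAD (x w : Fin 4 → ℝ)
    (hxmem : ∀ μ, x μ ∈ Set.Icc (-1 : ℝ) 1)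
    (hwsum : ∑ μ, w μ = 1)
    (hGaussExact : ∀ p : Polynomial ℝ, p.natDegree ≤ 7 →
      ∑ μ, w μ * p.eval (x μ) = (1 / 2) * ∫ t in (-1 : ℝ)..1, p.eval t)
    (lam1 lam2 : ℝ) (h1 : 0 ≤ lam1) (h2 : 0 ≤ lam2) (hpos : 0 < lam1 + lam2) :
    ∀ f : MvPolynomial (Fin 2) ℝ, f.totalDegree ≤ 3 →
      let δ : ℝ := (lam1 - lam2) / (lam1 + lam2)
      let s : ℝ := Real.sqrt (2 * |δ| / (3 + 3 * |δ|))
      let P1 : ℝ × ℝ := if δ ≤ 0 then (s, 0) else (0, s)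
      let P2 : ℝ × ℝ := if δ ≤ 0 then (-s, 0) else (0, -s)
      (1 / 4) * ∫ a in (-1 : ℝ)..1, ∫ b in (-1 : ℝ)..1, eval2 f a b
        = (1 / (4 + 2 * |δ|)) * ∑ μ, w μ *
            ((lam1 / (lam1 + lam2)) * (eval2 f (-1) (x μ) + eval2 f 1 (x μ))
              + (lam2 / (lam1 + lam2)) * (eval2 f (x μ) (-1) + eval2 f (x μ) 1))
          + ((1 + |δ|) / (2 * (2 + |δ|))) * (eval2 f P1.1 P1.2 + eval2 f P2.1 P2.2) :=
  cuiDingWu_CAD_general x w hGaussExact lam1 lam2 hpos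
end
end

section
/- The ideal equation of state satisfies the admissibility conditions: for every Γ ∈ (1,2], the function h(p,ρ) = 1 + Γp/((Γ−1)ρ) on (0,∞)×(0,∞) satisfies, for all p, ρ > 0: (heq1) h(p,ρ) ≥ √(1 + p²/ρ²) + p/ρ, and (heq2) h(p,ρ)·(1/ρ − ∂h/∂p(p,ρ)) < ∂h/∂ρ(p,ρ) < 0. -/
/-! With `κ = Γ/(Γ-1) ≥ 2` and `x = p/ρ ≥ 0` the ideal EOS reads `h = 1 + κx`.
(heq1) follows from `√(1 + x²) ≤ 1 + x`. Multiplying (heq2) by `ρ` turns its left half into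
`(1 + κx)(1 - κ) < -κx`, i.e. `(1 - κ) + κx(2 - κ) < 0`, where both summands have the right sign
because `κ ≥ 2`; its right half is `∂h/∂ρ = -κx/ρ < 0`. -/

noncomputable section

/-- The ideal EOS `h(p,ρ) = 1 + Γp/((Γ-1)ρ)`. -/
def hIdeal (Γ p ρ : ℝ) : ℝ := 1 + Γ * p / ((Γ - 1) * ρ)

lemma hIdeal_eq_one_add_mul_div (Γ p ρ : ℝ) : hIdeal Γ p ρ = 1 + Γ / (Γ - 1) * (p / ρ) := by
  rw [hIdeal, mul_div_mul_comm]

lemma two_le_div_sub_one {Γ : ℝ} (hΓ1 : 1 < Γ) (hΓ2 : Γ ≤ 2) : 2 ≤ Γ / (Γ - 1) := by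
  rw [le_div_iff₀ (by linarith)]; linarith

lemma hasDerivAt_hIdeal_pressure (Γ p ρ : ℝ) :
    HasDerivAt (fun p' => hIdeal Γ p' ρ) (Γ / ((Γ - 1) * ρ)) p := by
  simpa [hIdeal] using (((hasDerivAt_id p).const_mul Γ).div_const ((Γ - 1) * ρ)).const_add 1

lemma hasDerivAt_hIdeal_density (Γ p : ℝ) {ρ : ℝ} (hρ : ρ ≠ 0) :
    HasDerivAt (fun ρ' => hIdeal Γ p ρ') (-(Γ * p / (Γ - 1)) / ρ ^ 2) ρ := by
  have hfun : (fun ρ' => hIdeal Γ p ρ') = fun ρ' => 1 + Γ * p / (Γ - 1) * ρ'⁻¹ := by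
    funext ρ'
    rw [hIdeal, ← div_eq_mul_inv, div_div]
  rw [hfun]
  exact (((hasDerivAt_inv hρ).const_mul _).const_add 1).congr_deriv (by ring)

lemma sqrt_add_div_le_hIdeal {Γ p ρ : ℝ} (hΓ1 : 1 < Γ) (hΓ2 : Γ ≤ 2) (hp : 0 ≤ p) (hρ : 0 ≤ ρ) :
    √(1 + p ^ 2 / ρ ^ 2) + p / ρ ≤ hIdeal Γ p ρ := by
  have hx : 0 ≤ p / ρ := div_nonneg hp hρ
  have hsqrt : √(1 + p ^ 2 / ρ ^ 2) ≤ 1 + p / ρ := by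
    simpa [Real.norm_of_nonneg hx, div_pow] using sqrt_one_add_norm_sq_le (p / ρ)
  rw [hIdeal_eq_one_add_mul_div]
  nlinarith [two_le_div_sub_one hΓ1 hΓ2]

lemma hIdeal_mul_sub_lt {Γ p ρ : ℝ} (hΓ1 : 1 < Γ) (hΓ2 : Γ ≤ 2) (hp : 0 ≤ p) (hρ : 0 < ρ) :
    hIdeal Γ p ρ * (1 / ρ - Γ / ((Γ - 1) * ρ)) < -(Γ * p / (Γ - 1)) / ρ ^ 2 := by
  set κ := Γ / (Γ - 1) with hκ
  have hκ2 : 2 ≤ κ := two_le_div_sub_one hΓ1 hΓ2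
  have hx : 0 ≤ p / ρ := div_nonneg hp hρ.le
  have hlhs : hIdeal Γ p ρ * (1 / ρ - Γ / ((Γ - 1) * ρ)) = (1 + κ * (p / ρ)) * (1 - κ) / ρ := by
    rw [hIdeal_eq_one_add_mul_div, hκ]; field_simp
  have hrhs : -(Γ * p / (Γ - 1)) / ρ ^ 2 = -(κ * (p / ρ)) / ρ := by
    rw [hκ]; field_simp
  rw [hlhs, hrhs, div_lt_div_iff_of_pos_right hρ]
  nlinarith [mul_nonneg (mul_nonneg (by linarith : (0 : ℝ) ≤ κ) hx) (by linarith : 0 ≤ κ - 2)]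

/-- The ideal EOS satisfies (heq1) and (heq2). -/
theorem idealEOS_admissible (Γ : ℝ) (hΓ1 : 1 < Γ) (hΓ2 : Γ ≤ 2)
    (p ρ : ℝ) (hp : 0 < p) (hρ : 0 < ρ) :
    Real.sqrt (1 + p ^ 2 / ρ ^ 2) + p / ρ ≤ hIdeal Γ p ρ ∧
    hIdeal Γ p ρ * (1 / ρ - deriv (fun p' => hIdeal Γ p' ρ) p)
        < deriv (fun ρ' => hIdeal Γ p ρ') ρ ∧
    deriv (fun ρ' => hIdeal Γ p ρ') ρ < 0 := by
  rw [(hasDerivAt_hIdeal_pressure Γ p ρ).deriv, (hasDerivAt_hIdeal_density Γ p hρ.ne').deriv]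
  refine ⟨sqrt_add_div_le_hIdeal hΓ1 hΓ2 hp.le hρ.le, hIdeal_mul_sub_lt hΓ1 hΓ2 hp.le hρ, ?_⟩
  have hcoef : 0 < Γ * p / (Γ - 1) := div_pos (by positivity) (by linarith)
  exact div_neg_of_neg_of_pos (neg_neg_of_pos hcoef) (by positivity)
end
end
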